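/- (Theorem 3.4) Let ℓ and θ be real numbers with 0 < ℓ < W(3/2) and |θ| > (3π²)^{1/4} · √ℓ. Then π ℓ sinh(2 r₀(ℓ)) < |θ| cosh(r₀(ℓ)) < 2 ∫₀^{r₀(ℓ)} √(ℓ² cosh²(u) + θ² sinh²(u)) du. (Here π ℓ sinh(2r₀) is the area of the boundary torus of the maximal solid tube, and the integral expression is the area of the helicoidal minimal annulus inside the tube.) -/

import Mathlib

/-! With `t = √(4πℓ/√3)` we have `κ = cosh t - 1 ≥ t²/2`, while the equation defining the tube
radius `r` gives `2κ sinh² r = √(1 - 2κ) - κ ≤ 1`. Hence `4πℓ sinh² r ≤ √3`, and together with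
`θ² > √3πℓ` this gives `2πℓ sinh r < |θ|`, the first inequality because
`sinh 2r = 2 sinh r cosh r`. The hypothesis `ℓ < W(3/2)` says exactly `κ < 1/(1 + √50)`, which
forces `cosh² r > 4`. The integrand dominates `|θ| sinh u`, so twice the integral is at least
`2|θ|(cosh r - 1) > |θ| cosh r`. -/

/-- Inverse hyperbolic cosine: `arcosh y = log (y + √(y² - 1))` for `y ≥ 1`. -/
noncomputable def arcosh (y : ℝ) : ℝ := Real.log (y + Real.sqrt (y ^ 2 - 1))

/-- The function `W` from the paper. -/
noncomputable def W (x : ℝ) : ℝ :=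
  (Real.sqrt 3 / (4 * Real.pi)) *
    (arcosh (1 + 1 / (1 + Real.sqrt (1 + (8 * x ^ 2 - 8 * x + 1) ^ 2)))) ^ 2

/-- The function `κ(ℓ) = cosh(√(4πℓ/√3)) - 1`. -/
noncomputable def κ (ℓ : ℝ) : ℝ :=
  Real.cosh (Real.sqrt (4 * Real.pi * ℓ / Real.sqrt 3)) - 1

/-- The tube radius `r₀(ℓ)`, the positive real with
`cosh²(r₀(ℓ)) = (1/2)(√(1 - 2κ(ℓ))/κ(ℓ) + 1)`. -/
noncomputable def r₀ (ℓ : ℝ) : ℝ :=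
  arcosh (Real.sqrt ((1 / 2) * (Real.sqrt (1 - 2 * κ ℓ) / κ ℓ + 1)))

open Real

theorem arcosh_eq_real_arcosh : _root_.arcosh = Real.arcosh := rfl

theorem one_add_sq_div_two_le_cosh (x : ℝ) : 1 + x ^ 2 / 2 ≤ cosh x := by
  have h := sum_le_hasSum (Finset.range 2)
    (fun n _ => div_nonneg (by rw [pow_mul]; positivity) (by positivity)) (hasSum_cosh x)
  norm_num [Finset.sum_range_succ] at h
  linarith

theorem two_mul_pi_mul_div_sqrt_three_le_κ {ℓ : ℝ} (hℓ : 0 ≤ ℓ) :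
    2 * π * ℓ / √3 ≤ κ ℓ := by
  have ht : √(4 * π * ℓ / √3) ^ 2 = 4 * π * ℓ / √3 := sq_sqrt (by positivity)
  have := one_add_sq_div_two_le_cosh √(4 * π * ℓ / √3)
  rw [ht] at this
  rw [κ]
  linarith [show 4 * π * ℓ / √3 / 2 = 2 * π * ℓ / √3 by ring]

theorem κ_pos {ℓ : ℝ} (hℓ : 0 < ℓ) : 0 < κ ℓ :=
  (by positivity : (0 : ℝ) < 2 * π * ℓ / √3).trans_le (two_mul_pi_mul_div_sqrt_three_le_κ hℓ.le)

theorem κ_lt_of_lt_W {x ℓ : ℝ} (hℓ : 0 ≤ ℓ) (h : ℓ < W x) :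
    κ ℓ < 1 / (1 + √(1 + (8 * x ^ 2 - 8 * x + 1) ^ 2)) := by
  set b := 1 + 1 / (1 + √(1 + (8 * x ^ 2 - 8 * x + 1) ^ 2))
  have hb : 1 ≤ b := le_add_of_nonneg_right (by positivity)
  have hsq : 4 * π * ℓ / √3 < Real.arcosh b ^ 2 := by
    rw [W, arcosh_eq_real_arcosh] at h
    rw [div_lt_iff₀ (by positivity)]
    have := pi_pos
    calc 4 * π * ℓ < 4 * π * (√3 / (4 * π) * Real.arcosh b ^ 2) := by gcongr
      _ = Real.arcosh b ^ 2 * √3 := by field_simp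
  have ht : √(4 * π * ℓ / √3) < Real.arcosh b := by
    simpa only [sqrt_sq (arcosh_nonneg hb)] using sqrt_lt_sqrt (by positivity) hsq
  have hcosh : cosh √(4 * π * ℓ / √3) < b :=
    calc cosh √(4 * π * ℓ / √3) < cosh (Real.arcosh b) := by
          rwa [cosh_lt_cosh, abs_of_nonneg (sqrt_nonneg _), abs_of_nonneg (arcosh_nonneg hb)]
      _ = b := cosh_arcosh hb
  rw [κ]
  linarith

theorem lt_sqrt_one_sub_two_mul_div {k c : ℝ} (hk : 0 < k) (hc : 0 ≤ c)
    (h : k < 1 / (1 + √(1 + c ^ 2))) : c < √(1 - 2 * k) / k := by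
  set s := √(1 + c ^ 2)
  have hs : s ^ 2 = 1 + c ^ 2 := sq_sqrt (by positivity)
  have hs1 : 1 ≤ s := one_le_sqrt.2 (by nlinarith)
  have hks : k * (1 + s) < 1 := by rwa [lt_div_iff₀ (by positivity)] at h
  have hck : (c * k) ^ 2 = (s - 1) * k * (k * (1 + s)) := by linear_combination (-k ^ 2) * hs
  have hquad : (c * k) ^ 2 < 1 - 2 * k := by
    have := mul_le_of_le_one_right (mul_nonneg (sub_nonneg.2 hs1) hk.le) hks.le
    linarith
  rw [lt_div_iff₀ hk]
  exact (lt_sqrt (by positivity)).2 hquad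

section TubeRadius

variable {k r : ℝ} (hk : 0 < k) (hr : cosh r ^ 2 = 1 / 2 * (√(1 - 2 * k) / k + 1))
include hk hr

theorem two_mul_mul_sinh_sq_le_one : 2 * k * sinh r ^ 2 ≤ 1 := by
  have hsinh : 2 * k * sinh r ^ 2 = √(1 - 2 * k) - k := by
    rw [sinh_sq, hr]
    field_simp
    ring
  rw [hsinh]
  linarith [sqrt_le_one.2 (by linarith : 1 - 2 * k ≤ 1)]

theorem add_one_div_two_lt_cosh_sq {c : ℝ} (hc : 0 ≤ c) (hkc : k < 1 / (1 + √(1 + c ^ 2))) :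
    (c + 1) / 2 < cosh r ^ 2 := by
  rw [hr]
  linarith [lt_sqrt_one_sub_two_mul_div hk hc hkc]

end TubeRadius

theorem sqrt_three_mul_pi_mul_lt_sq {ℓ θ : ℝ} (hℓ : 0 ≤ ℓ)
    (hθ : |θ| > (3 * π ^ 2) ^ ((1 : ℝ) / 4) * √ℓ) : √3 * π * ℓ < θ ^ 2 := by
  have hroot : ((3 * π ^ 2) ^ ((1 : ℝ) / 4)) ^ 2 = √3 * π := by
    rw [← rpow_natCast, ← rpow_mul (by positivity)]
    norm_num
    rw [← sqrt_eq_rpow, sqrt_mul (by norm_num), sqrt_sq pi_pos.le]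
  calc √3 * π * ℓ = ((3 * π ^ 2) ^ ((1 : ℝ) / 4) * √ℓ) ^ 2 := by
        rw [mul_pow, hroot, sq_sqrt hℓ]
    _ < |θ| ^ 2 := by gcongr
    _ = θ ^ 2 := sq_abs θ

theorem pi_mul_mul_sinh_two_mul_lt {ℓ θ r : ℝ} (hℓ : 0 < ℓ) (hsinh : 4 * π * ℓ * sinh r ^ 2 ≤ √3)
    (hθ : √3 * π * ℓ < θ ^ 2) : π * ℓ * sinh (2 * r) < |θ| * cosh r := by
  have hsq : (2 * π * ℓ * sinh r) ^ 2 < θ ^ 2 :=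
    calc (2 * π * ℓ * sinh r) ^ 2 = π * ℓ * (4 * π * ℓ * sinh r ^ 2) := by ring
      _ ≤ π * ℓ * √3 := by gcongr
      _ < θ ^ 2 := by linarith
  have hlt : 2 * π * ℓ * sinh r < |θ| := (le_abs_self _).trans_lt (sq_lt_sq.1 hsq)
  rw [sinh_two_mul]
  nlinarith [cosh_pos r]

theorem abs_mul_cosh_sub_one_le_integral (ℓ θ : ℝ) {r : ℝ} (hr : 0 ≤ r) :
    |θ| * (cosh r - 1) ≤ ∫ u in (0 : ℝ)..r, √(ℓ ^ 2 * cosh u ^ 2 + θ ^ 2 * sinh u ^ 2) := by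
  have hint : ∫ u in (0 : ℝ)..r, |θ| * sinh u = |θ| * (cosh r - 1) := by
    rw [intervalIntegral.integral_const_mul, intervalIntegral.integral_eq_sub_of_hasDerivAt
      (fun u _ => hasDerivAt_cosh u) (continuous_sinh.intervalIntegrable 0 r), cosh_zero]
  rw [← hint]
  refine intervalIntegral.integral_mono_on hr (Continuous.intervalIntegrable (by fun_prop) _ _)
    (Continuous.intervalIntegrable (by fun_prop) _ _) fun u hu => ?_
  have hsinh : 0 ≤ sinh u := sinh_nonneg_iff.2 hu.1
  refine le_sqrt_of_sq_le ?_
  rw [mul_pow, sq_abs]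
  nlinarith [sq_nonneg (ℓ * cosh u)]

theorem area_comparison (ℓ θ : ℝ) (h0 : 0 < ℓ) (h1 : ℓ < W (3 / 2))
    (hθ : |θ| > (3 * Real.pi ^ 2) ^ ((1 : ℝ) / 4) * Real.sqrt ℓ)
    (r : ℝ) (hr : 0 < r)
    (hcosh : (Real.cosh r) ^ 2 = (1 / 2) * (Real.sqrt (1 - 2 * κ ℓ) / κ ℓ + 1)) :
    Real.pi * ℓ * Real.sinh (2 * r) < |θ| * Real.cosh r ∧
    |θ| * Real.cosh r <
      2 * ∫ u in (0 : ℝ)..r,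
        Real.sqrt (ℓ ^ 2 * (Real.cosh u) ^ 2 + θ ^ 2 * (Real.sinh u) ^ 2) := by
  have hκ := κ_pos h0
  have hθsq := sqrt_three_mul_pi_mul_lt_sq h0.le hθ
  constructor
  · refine pi_mul_mul_sinh_two_mul_lt h0 ?_ hθsq
    calc 4 * π * ℓ * sinh r ^ 2 = √3 * (2 * π * ℓ / √3) * (2 * sinh r ^ 2) := by
          field_simp; norm_num
      _ ≤ √3 * κ ℓ * (2 * sinh r ^ 2) := by
          gcongr
          exact two_mul_pi_mul_div_sqrt_three_le_κ h0.le
      _ = √3 * (2 * κ ℓ * sinh r ^ 2) := by ring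
      _ ≤ √3 := mul_le_of_le_one_right (sqrt_nonneg 3) (two_mul_mul_sinh_sq_le_one hκ hcosh)
  · have hκ_lt := κ_lt_of_lt_W h0.le h1
    rw [show 8 * (3 / 2 : ℝ) ^ 2 - 8 * (3 / 2) + 1 = 7 by norm_num] at hκ_lt
    have hcosh_sq := add_one_div_two_lt_cosh_sq hκ hcosh (by norm_num) hκ_lt
    have hcosh_gt : 2 < cosh r := by nlinarith [cosh_pos r]
    have hθ_pos : 0 < |θ| := (by positivity : (0 : ℝ) ≤ _).trans_lt hθ
    calc |θ| * cosh r < 2 * (|θ| * (cosh r - 1)) := by nlinarith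
      _ ≤ _ := by gcongr; exact abs_mul_cosh_sub_one_le_integral ℓ θ hr.le
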